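/- The function m ↦ −m²/2 − I(m), where I(m) = −((1−m)/2)log((1−m)/2) − ((1+m)/2)log((1+m)/2), is convex, even, and attains its minimum at m = 0 on [−1,1]. -/

import Mathlib

noncomputable def entI (m : ℝ) : ℝ :=
  -((1 - m) / 2 * Real.log ((1 - m) / 2)) - (1 + m) / 2 * Real.log ((1 + m) / 2)

noncomputable def g₀ (m : ℝ) : ℝ := -m ^ 2 / 2 - entI m

/-!
Since `I(m)` is the binary entropy of `(1 + m) / 2`, `g₀` is even and smooth on `(-1, 1)` with
`g₀' m = artanh m - m` and `g₀'' m = 1 / (1 - m ^ 2) - 1 = m ^ 2 / (1 - m ^ 2) ≥ 0`, so it is convex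
on `[-1, 1]`. A convex even function is minimal at `0`, the midpoint of `m` and `-m`.
-/

open Real

theorem ConvexOn.map_zero_le_of_map_neg_eq {E : Type*} [AddCommGroup E] [Module ℝ E]
    {s : Set E} {f : E → ℝ} (hf : ConvexOn ℝ s f) {x : E} (hx : x ∈ s) (hnx : -x ∈ s)
    (hfx : f (-x) = f x) : f 0 ≤ f x := by
  have h := hf.2 hx hnx (by norm_num : (0 : ℝ) ≤ 1 / 2) (by norm_num : (0 : ℝ) ≤ 1 / 2)
    (by norm_num)
  rw [smul_neg, add_neg_cancel, hfx] at h
  simp only [smul_eq_mul] at h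
  linarith

theorem entI_eq_binEntropy (m : ℝ) : entI m = binEntropy ((1 + m) / 2) := by
  rw [binEntropy_eq_negMulLog_add_negMulLog_one_sub, entI, negMulLog, negMulLog]
  ring_nf

theorem g₀_eq_binEntropy : g₀ = fun m ↦ -m ^ 2 / 2 - binEntropy ((1 + m) / 2) := by
  funext m
  rw [g₀, entI_eq_binEntropy]

theorem g₀_neg (m : ℝ) : g₀ (-m) = g₀ m := by
  have h : (1 + -m) / 2 = 1 - (1 + m) / 2 := by ring
  simp only [g₀_eq_binEntropy, h, binEntropy_one_sub, neg_sq]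

theorem continuous_g₀ : Continuous g₀ := by
  rw [g₀_eq_binEntropy]
  fun_prop

theorem hasDerivAt_g₀ {m : ℝ} (h₁ : -1 < m) (h₂ : m < 1) :
    HasDerivAt g₀ (-m + (log (1 + m) - log (1 - m)) / 2) m := by
  have hp₀ : (1 + m) / 2 ≠ 0 := by linarith
  have hp₁ : (1 + m) / 2 ≠ 1 := by linarith
  have hH := (hasDerivAt_binEntropy hp₀ hp₁).comp m (((hasDerivAt_id m).const_add 1).div_const 2)
  have hsq := ((hasDerivAt_pow 2 m).neg).div_const 2
  rw [g₀_eq_binEntropy]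
  refine (hsq.sub hH).congr_deriv ?_
  have h : 1 - (1 + m) / 2 = (1 - m) / 2 := by ring
  rw [h, log_div (by linarith) two_ne_zero, log_div (by linarith) two_ne_zero]
  simp only [Nat.cast_ofNat]
  ring

theorem hasDerivAt_neg_add_half_log_sub_log {x : ℝ} (h₁ : -1 < x) (h₂ : x < 1) :
    HasDerivAt (fun x ↦ -x + (log (1 + x) - log (1 - x)) / 2) (x ^ 2 / (1 - x ^ 2)) x := by
  have hp : 1 + x ≠ 0 := by linarith
  have hm : 1 - x ≠ 0 := by linarith
  have hlp := ((hasDerivAt_id' x).const_add 1).log hp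
  have hlm := ((hasDerivAt_id' x).const_sub 1).log hm
  refine ((hasDerivAt_id' x).neg.add ((hlp.sub hlm).div_const 2)).congr_deriv ?_
  have hsq : 1 - x ^ 2 ≠ 0 := by nlinarith
  field_simp
  ring

theorem convexOn_g₀ : ConvexOn ℝ (Set.Icc (-1 : ℝ) 1) g₀ := by
  refine convexOn_of_hasDerivWithinAt2_nonneg (convex_Icc _ _) continuous_g₀.continuousOn
    (f' := fun x ↦ -x + (log (1 + x) - log (1 - x)) / 2) (f'' := fun x ↦ x ^ 2 / (1 - x ^ 2))
    (fun x hx ↦ ?_) (fun x hx ↦ ?_) (fun x hx ↦ ?_) <;> rw [interior_Icc] at hx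
  · exact (hasDerivAt_g₀ hx.1 hx.2).hasDerivWithinAt
  · exact (hasDerivAt_neg_add_half_log_sub_log hx.1 hx.2).hasDerivWithinAt
  · have : 0 < 1 - x ^ 2 := by nlinarith [hx.1, hx.2]
    positivity

theorem g₀_convex_even_min :
    ConvexOn ℝ (Set.Icc (-1:ℝ) 1) g₀ ∧
    (∀ m : ℝ, g₀ (-m) = g₀ m) ∧
    (∀ m ∈ Set.Icc (-1:ℝ) 1, g₀ 0 ≤ g₀ m) := by
  refine ⟨convexOn_g₀, g₀_neg, fun m hm ↦ convexOn_g₀.map_zero_le_of_map_neg_eq hm ?_ (g₀_neg m)⟩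
  exact ⟨by linarith [hm.2], by linarith [hm.1]⟩
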